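/- Suppose ln²n = o(m), m < (1-ε)·n ln n/ln ln n for some fixed ε > 0, and p(1-(1-p)^{n-1}) = (ln n + c_n)/m with c_n → c ∈ (-∞,∞]. Then for every vertex v, P(deg(v) = 1 in G(n,m,p)) = o(1/n); consequently, with high probability G(n,m,p) has no vertex of degree 1. -/

import Mathlib

open MeasureTheory Filter

noncomputable def bern (p : ℝ) : Measure Bool :=
  (PMF.bernoulli (min (Real.toNNReal p) 1) (min_le_right _ _)).toMeasure

/-- The random intersection graph model: the sample space is the bipartite
choice structure `ω : Fin n → Fin m → Bool`, where `ω v w = true` means vertex `v`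
chose feature `w`, each choice made independently with probability `p`. -/
noncomputable def rig (n m : ℕ) (p : ℝ) : Measure (Fin n → Fin m → Bool) :=
  Measure.pi fun _ => Measure.pi fun _ => bern p

/-- The intersection graph determined by the choices `ω`:
two distinct vertices are adjacent iff they share a feature. -/
def rigGraph {n m : ℕ} (ω : Fin n → Fin m → Bool) : SimpleGraph (Fin n) where
  Adj v v' := v ≠ v' ∧ ∃ w, ω v w = true ∧ ω v' w = true
  symm := ⟨by rintro v v' ⟨h, w, h1, h2⟩; exact ⟨h.symm, w, h2, h1⟩⟩
  loopless := ⟨by rintro v ⟨h, -⟩; exact h rfl⟩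

/-- degree of `v` in the intersection graph -/
noncomputable def deg {n m : ℕ} (ω : Fin n → Fin m → Bool) (v : Fin n) : ℕ :=
  Set.ncard {u | (rigGraph ω).Adj v u}

/-- `W(v)`: number of features chosen by `v` -/
noncomputable def Wv {n m : ℕ} (ω : Fin n → Fin m → Bool) (v : Fin n) : ℕ :=
  Set.ncard {w | ω v w = true}

/-- `V(w)`: number of vertices choosing feature `w` -/
noncomputable def Vw {n m : ℕ} (ω : Fin n → Fin m → Bool) (w : Fin m) : ℕ :=
  Set.ncard {v | ω v w = true}

/-- `W'(v)`: number of features chosen by `v` that are chosen by at least two vertices -/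
noncomputable def Wv' {n m : ℕ} (ω : Fin n → Fin m → Bool) (v : Fin n) : ℕ :=
  Set.ncard {w | ω v w = true ∧ 2 ≤ Set.ncard {u | ω u w = true}}

/-- `W(S)`: number of features chosen by at least one vertex of `S` -/
noncomputable def WS {n m : ℕ} (ω : Fin n → Fin m → Bool) (S : Set (Fin n)) : ℕ :=
  Set.ncard {w | ∃ v ∈ S, ω v w = true}

/-- `V(R)`: number of vertices choosing at least one feature of `R` -/
noncomputable def VR {n m : ℕ} (ω : Fin n → Fin m → Bool) (R : Set (Fin m)) : ℕ :=
  Set.ncard {v | ∃ w ∈ R, ω v w = true}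

/-- `W''(K)`: number of features chosen by at least two vertices of `K` -/
noncomputable def WSpp {n m : ℕ} (ω : Fin n → Fin m → Bool) (K : Set (Fin n)) : ℕ :=
  Set.ncard {w | 2 ≤ Set.ncard {v | v ∈ K ∧ ω v w = true}}

/-- `N(S)`: number of vertices outside `S` adjacent to at least one vertex of `S` -/
noncomputable def NS {n m : ℕ} (ω : Fin n → Fin m → Bool) (S : Set (Fin n)) : ℕ :=
  Set.ncard {u | u ∉ S ∧ ∃ v ∈ S, (rigGraph ω).Adj v u}

noncomputable def d0 (n m : ℕ) (p : ℝ) : ℝ := m * p * (1 - (1 - p) ^ (n - 1))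

noncomputable def d1 (n m : ℕ) (p : ℝ) : ℝ := n * m * p ^ 2


/-!
If `v` has degree one, with neighbour `u₀` through a common feature `w`, then the choices lie in
a box set: `v` chooses exactly its feature set `s ∋ w`, `u₀` chooses `w`, and every other vertex
avoids `s`. Summing the product measures of these boxes over `u₀`, `w`, `s` gives
`P(deg v = 1) ≤ n m p² x (1 - p (1 - x))^(m - 1)` with `x = (1 - p)^(n - 2)`.

Put `T = n p`. From `(1 - a)^k ≤ exp (-a k)` and `p (1 - (1 - p)^(n - 1)) m = log n + c_n`,
`n` times this bound is `O((log n + c_n) e^(-c_n) T e^(-T))`. The upper bound on `m` forces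
`T ≥ κ log log n` for some `κ > 1`, so this tends to `0`: for `c_n ≤ log n` the factor
`T e^(-T) ≤ κ log log n (log n)^(-κ)` beats `log n`, and for `c_n > log n` the factor
`c_n e^(-c_n)` is already `O(log n / n)`. A union bound over `v` gives the second claim.
-/

open Finset Real Topology

instance (p : ℝ) : IsProbabilityMeasure (bern p) := by
  unfold bern; infer_instance

instance (n m : ℕ) (p : ℝ) : IsProbabilityMeasure (rig n m p) := by
  unfold rig; infer_instance

lemma bern_real_singleton {p : ℝ} (hp0 : 0 ≤ p) (hp1 : p ≤ 1) (b : Bool) :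
    (bern p).real {b} = if b then p else 1 - p := by
  have hmin : min p.toNNReal 1 = p.toNNReal := min_eq_left (Real.toNNReal_le_one.2 hp1)
  rw [measureReal_def, bern, PMF.toMeasure_apply_singleton _ _ (measurableSet_singleton b),
    PMF.bernoulli_apply, hmin]
  cases b <;> simp [hp0, hp1]

lemma measureReal_univ_pi {ι : Type*} [Fintype ι] {α : ι → Type*} [∀ i, MeasurableSpace (α i)]
    (μ : ∀ i, Measure (α i)) [∀ i, SigmaFinite (μ i)] (s : ∀ i, Set (α i)) :
    (Measure.pi μ).real (Set.univ.pi s) = ∏ i, (μ i).real (s i) := by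
  simp only [measureReal_def, Measure.pi_pi, ENNReal.toReal_prod]

lemma prod_ite_eq_mul_pow {ι R : Type*} [Fintype ι] [DecidableEq ι] [CommMonoid R] (i : ι)
    (a c : R) :
    ∏ j, (if j = i then a else c) = a * c ^ (Fintype.card ι - 1) := by
  rw [prod_ite, filter_eq', filter_ne', if_pos (mem_univ i), prod_singleton,
    prod_const, card_erase_of_mem (mem_univ i), card_univ]

lemma prod_ite_ite_eq {ι R : Type*} [Fintype ι] [DecidableEq ι] [CommMonoid R] {i j : ι}
    (hji : j ≠ i) (a b c : R) :
    ∏ k, (if k = i then a else if k = j then b else c) = a * b * c ^ (Fintype.card ι - 2) := by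
  rw [← mul_prod_erase univ _ (mem_univ i), if_pos rfl,
    ← mul_prod_erase (univ.erase i) _ (mem_erase.2 ⟨hji, mem_univ j⟩), if_neg hji, if_pos rfl,
    prod_congr rfl fun k hk => by
      rw [if_neg (ne_of_mem_erase (mem_of_mem_erase hk)), if_neg (ne_of_mem_erase hk)],
    prod_const, card_erase_of_mem (mem_erase.2 ⟨hji, mem_univ j⟩),
    card_erase_of_mem (mem_univ i), card_univ, mul_assoc, Nat.sub_sub]

lemma sum_filter_eq_true_prod_ite {ι R : Type*} [Fintype ι] [DecidableEq ι] [CommSemiring R]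
    (i : ι) (a b : R) :
    ∑ s ∈ univ.filter (fun s : ι → Bool => s i = true), ∏ j, (if s j then a else b)
      = a * (a + b) ^ (Fintype.card ι - 1) := by
  rw [sum_filter]
  calc ∑ s : ι → Bool, (if s i = true then ∏ j, (if s j then a else b) else 0)
      = ∑ s : ι → Bool, ∏ j, (if j = i then (if s j then a else 0) else (if s j then a else b)) := by
        refine sum_congr rfl fun s _ => ?_
        split_ifs with hs
        · exact prod_congr rfl fun j _ => by split_ifs <;> simp_all
        · exact (prod_eq_zero (mem_univ i) (by simp [hs])).symm
    _ = ∏ j, (if j = i then a else a + b) := by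
        rw [← Fintype.prod_sum fun j (β : Bool) =>
          if j = i then (if β then a else 0) else (if β then a else b)]
        exact prod_congr rfl fun j _ => by split_ifs <;> simp
    _ = a * (a + b) ^ (Fintype.card ι - 1) := prod_ite_eq_mul_pow i a (a + b)

section Witness

variable {n m : ℕ} {p : ℝ}

lemma pi_bern_real_singleton (hp0 : 0 ≤ p) (hp1 : p ≤ 1) (s : Fin m → Bool) :
    (Measure.pi fun _ : Fin m => bern p).real {s} = ∏ w, if s w then p else 1 - p := by
  rw [← Set.univ_pi_singleton s, measureReal_univ_pi]
  exact prod_congr rfl fun w _ => bern_real_singleton hp0 hp1 (s w)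

lemma pi_bern_real_chooses (hp0 : 0 ≤ p) (hp1 : p ≤ 1) (w : Fin m) :
    (Measure.pi fun _ : Fin m => bern p).real
      (Set.univ.pi fun w' => if w' = w then {true} else Set.univ) = p := by
  rw [measureReal_univ_pi, ← mul_one p, ← one_pow (Fintype.card (Fin m) - 1),
    ← prod_ite_eq_mul_pow w]
  refine prod_congr rfl fun w' _ => ?_
  split_ifs
  · simp [bern_real_singleton hp0 hp1]
  · exact probReal_univ

lemma pi_bern_real_avoids (hp0 : 0 ≤ p) (hp1 : p ≤ 1) (s : Fin m → Bool) :
    (Measure.pi fun _ : Fin m => bern p).real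
      (Set.univ.pi fun w => if s w then {false} else Set.univ) = ∏ w, if s w then 1 - p else 1 := by
  rw [measureReal_univ_pi]
  refine prod_congr rfl fun w _ => ?_
  split_ifs
  · simp [bern_real_singleton hp0 hp1]
  · exact probReal_univ

def degOneWitness (v u₀ : Fin n) (w : Fin m) (s : Fin m → Bool) : Set (Fin n → Fin m → Bool) :=
  Set.univ.pi fun u =>
    if u = v then {s}
    else if u = u₀ then Set.univ.pi fun w' => if w' = w then {true} else Set.univ
    else Set.univ.pi fun w' => if s w' then {false} else Set.univ

lemma rig_real_degOneWitness (hp0 : 0 ≤ p) (hp1 : p ≤ 1) {v u₀ : Fin n} (hne : u₀ ≠ v)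
    (w : Fin m) (s : Fin m → Bool) :
    (rig n m p).real (degOneWitness v u₀ w s)
      = p * ∏ w', if s w' then p * (1 - p) ^ (n - 2) else 1 - p := by
  rw [rig, degOneWitness, measureReal_univ_pi]
  simp only [apply_ite (Measure.real _), pi_bern_real_singleton hp0 hp1,
    pi_bern_real_chooses hp0 hp1, pi_bern_real_avoids hp0 hp1]
  rw [prod_ite_ite_eq hne, Fintype.card_fin, ← prod_pow, mul_comm _ p, mul_assoc,
    ← prod_mul_distrib]
  exact congrArg _ (prod_congr rfl fun w' _ => by split_ifs <;> simp)

lemma setOf_deg_eq_one_subset (v : Fin n) :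
    {ω : Fin n → Fin m → Bool | deg ω v = 1} ⊆
      ⋃ u₀ ∈ univ.erase v, ⋃ w ∈ univ, ⋃ s ∈ univ.filter (fun s : Fin m → Bool => s w = true),
        degOneWitness v u₀ w s := by
  intro ω hω
  obtain ⟨u₀, hu₀⟩ := Set.ncard_eq_one.1 hω
  have hadj : u₀ ∈ {u | (rigGraph ω).Adj v u} := hu₀ ▸ Set.mem_singleton u₀
  obtain ⟨hvu₀, w, hvw, hu₀w⟩ := hadj
  simp only [Set.mem_iUnion, mem_erase, mem_filter, mem_univ, and_true, true_and, exists_prop]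
  refine ⟨u₀, Ne.symm hvu₀, w, ω v, hvw, fun u _ => ?_⟩
  dsimp only
  split_ifs with huv huu₀
  · exact huv ▸ rfl
  · intro w' _
    dsimp only
    split_ifs with h
    · exact huu₀ ▸ h ▸ hu₀w
    · trivial
  · intro w' _
    dsimp only
    split_ifs with hs
    · have hnadj : ¬ (rigGraph ω).Adj v u := fun h => huu₀ (hu₀ ▸ h : u ∈ ({u₀} : Set _))
      simpa [rigGraph, Ne.symm huv, hs] using
        fun h : ω u w' = true => hnadj ⟨Ne.symm huv, w', hs, h⟩
    · trivial

end Witness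

noncomputable def degOneBound (n m : ℕ) (p : ℝ) : ℝ :=
  n * m * p ^ 2 * (1 - p) ^ (n - 2) * (1 - p * (1 - (1 - p) ^ (n - 2))) ^ (m - 1)

section DegreeOne

variable {n m : ℕ} {p : ℝ}

lemma degOneBound_nonneg (hp0 : 0 ≤ p) (hp1 : p ≤ 1) : 0 ≤ degOneBound n m p := by
  have hx0 : 0 ≤ (1 - p) ^ (n - 2) := pow_nonneg (by linarith) _
  have hx1 : (1 - p) ^ (n - 2) ≤ 1 := pow_le_one₀ (by linarith) (by linarith)
  have : 0 ≤ 1 - p * (1 - (1 - p) ^ (n - 2)) := by nlinarith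
  unfold degOneBound
  positivity

lemma rig_real_deg_eq_one_le (hp0 : 0 ≤ p) (hp1 : p ≤ 1) (v : Fin n) :
    (rig n m p).real {ω | deg ω v = 1} ≤ degOneBound n m p := by
  set x := (1 - p) ^ (n - 2)
  have hx : 0 ≤ x := pow_nonneg (by linarith) _
  calc (rig n m p).real {ω | deg ω v = 1}
      ≤ ∑ u₀ ∈ univ.erase v, ∑ w ∈ univ, ∑ s ∈ univ.filter (fun s : Fin m → Bool => s w = true),
          (rig n m p).real (degOneWitness v u₀ w s) := by
        refine (measureReal_mono (setOf_deg_eq_one_subset v) (measure_ne_top _ _)).trans ?_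
        refine (measureReal_biUnion_finset_le _ _).trans (sum_le_sum fun u₀ _ => ?_)
        refine (measureReal_biUnion_finset_le _ _).trans (sum_le_sum fun w _ => ?_)
        exact measureReal_biUnion_finset_le _ _
    _ = ∑ u₀ ∈ univ.erase v, ∑ w : Fin m, p * (p * x * (p * x + (1 - p)) ^ (m - 1)) := by
        refine sum_congr rfl fun u₀ hu₀ => sum_congr rfl fun w _ => ?_
        simp only [rig_real_degOneWitness hp0 hp1 (ne_of_mem_erase hu₀), ← mul_sum,
          sum_filter_eq_true_prod_ite, Fintype.card_fin]
        rfl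
    _ = (univ.erase v).card * m * p ^ 2 * x * (p * x + (1 - p)) ^ (m - 1) := by
        simp only [sum_const, card_univ, Fintype.card_fin, nsmul_eq_mul]
        ring
    _ ≤ degOneBound n m p := by
        have hcard : ((univ.erase v).card : ℝ) ≤ n := by
          exact_mod_cast (card_le_univ _).trans (Fintype.card_fin n).le
        have hbase : 0 ≤ p * x + (1 - p) := by nlinarith
        rw [degOneBound, show 1 - p * (1 - x) = p * x + (1 - p) by ring]
        gcongr

lemma rig_real_forall_deg_ne_one_ge (hp0 : 0 ≤ p) (hp1 : p ≤ 1) :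
    1 - n * degOneBound n m p ≤ (rig n m p).real {ω | ∀ v, deg ω v ≠ 1} := by
  have hcompl : {ω : Fin n → Fin m → Bool | ∀ v, deg ω v ≠ 1} = (⋃ v, {ω | deg ω v = 1})ᶜ := by
    ext ω; simp
  have hunion : (rig n m p).real (⋃ v, {ω | deg ω v = 1}) ≤ n * degOneBound n m p :=
    calc (rig n m p).real (⋃ v, {ω | deg ω v = 1})
        ≤ ∑ v : Fin n, (rig n m p).real {ω | deg ω v = 1} := measureReal_iUnion_fintype_le _
      _ ≤ ∑ _v : Fin n, degOneBound n m p :=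
          sum_le_sum fun v _ => rig_real_deg_eq_one_le hp0 hp1 v
      _ = n * degOneBound n m p := by simp
  rw [hcompl, probReal_compl_eq_one_sub (Set.to_countable _).measurableSet]
  linarith

end DegreeOne

lemma one_sub_pow_le_exp_neg {a : ℝ} (ha : a ≤ 1) (k : ℕ) : (1 - a) ^ k ≤ exp (-(a * k)) := by
  calc (1 - a) ^ k ≤ exp (-a) ^ k := pow_le_pow_left₀ (by linarith) (one_sub_le_exp_neg a) k
    _ = exp (-(a * k)) := by rw [← exp_nat_mul]; ring_nf

lemma one_sub_pow_sub_le {p : ℝ} (hp : p ≤ 1) {n j : ℕ} (hj : j ≤ n) :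
    (1 - p) ^ (n - j) ≤ exp j * exp (-(n * p)) := by
  refine (one_sub_pow_le_exp_neg hp _).trans ?_
  rw [← exp_add, Nat.cast_sub hj]
  exact exp_le_exp.2 (by nlinarith [(Nat.cast_nonneg j : (0 : ℝ) ≤ j)])

lemma one_sub_pow_pred_le_exp {a : ℝ} (ha : a ≤ 1) (k : ℕ) :
    (1 - a) ^ (k - 1) ≤ exp (1 - a * k) := by
  refine (one_sub_pow_le_exp_neg ha _).trans (exp_le_exp.2 ?_)
  rcases Nat.eq_zero_or_pos k with rfl | hk
  · simp
  · rw [Nat.cast_pred hk]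
    linarith

lemma exp_neg_le_two_div_sq {x : ℝ} (hx : 0 < x) : exp (-x) ≤ 2 / x ^ 2 := by
  rw [exp_neg, inv_le_comm₀ (exp_pos x) (by positivity), inv_div]
  simpa using pow_div_factorial_le_exp x hx.le 2

lemma mul_exp_neg_le_mul_exp_neg {a b : ℝ} (ha : 1 ≤ a) (hab : a ≤ b) :
    b * exp (-b) ≤ a * exp (-a) := by
  have hb : b ≤ a * exp (b - a) := by nlinarith [add_one_le_exp (b - a)]
  calc b * exp (-b) ≤ a * exp (b - a) * exp (-b) := by gcongr
    _ = a * exp (-a) := by rw [mul_assoc, ← exp_add]; ring_nf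

lemma mul_sq_mul_one_sub_pow_le {n M : ℕ} {p : ℝ} (hp0 : 0 < p) (hp1 : p < 1) (hn : 2 ≤ n)
    (hMn : (M : ℝ) ≤ n ^ 2) :
    M * p ^ 2 * (1 - p) ^ (n - 2) ≤ 2 * exp 2 := by
  have hn0 : (0 : ℝ) < n := by positivity
  have hx : (1 - p) ^ (n - 2) ≤ exp 2 * exp (-(n * p)) := by
    simpa using one_sub_pow_sub_le hp1.le hn
  have hpx : p ^ 2 * (1 - p) ^ (n - 2) ≤ 2 * exp 2 / n ^ 2 :=
    calc p ^ 2 * (1 - p) ^ (n - 2) ≤ p ^ 2 * (exp 2 * (2 / (n * p) ^ 2)) := by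
          gcongr
          exact hx.trans (by gcongr; exact exp_neg_le_two_div_sq (by positivity))
      _ = 2 * exp 2 / n ^ 2 := by field_simp
  calc M * p ^ 2 * (1 - p) ^ (n - 2) = M * (p ^ 2 * (1 - p) ^ (n - 2)) := by ring
    _ ≤ n ^ 2 * (2 * exp 2 / n ^ 2) := by gcongr
    _ = 2 * exp 2 := by field_simp

lemma mul_degOneBound_le {n M : ℕ} {p γ : ℝ} (hp0 : 0 < p) (hp1 : p < 1) (hn : 2 ≤ n)
    (hMn : (M : ℝ) ≤ n ^ 2) (hT : 2 ≤ n * p)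
    (hQ : p * (1 - (1 - p) ^ (n - 1)) * M = log n + γ) :
    n * degOneBound n M p
      ≤ 2 * exp (3 + 2 * exp 2) * ((log n + γ) * exp (-γ) * (n * p * exp (-(n * p)))) := by
  set T := (n : ℝ) * p
  set x := (1 - p) ^ (n - 2)
  have hn0 : (0 : ℝ) < n := by positivity
  have hx0 : 0 ≤ x := pow_nonneg (by linarith) _
  have hx1 : x ≤ 1 := pow_le_one₀ (by linarith) (by linarith)
  have hx : x ≤ exp 2 * exp (-T) := by simpa using one_sub_pow_sub_le hp1.le hn
  have hsucc : (1 - p) ^ (n - 1) = (1 - p) * x := by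
    rw [← pow_succ']; congr 1; omega
  have hhalf : (1 - p) ^ (n - 1) ≤ 1 / 2 := by
    refine (one_sub_pow_sub_le hp1.le (by omega : 1 ≤ n)).trans ?_
    calc exp (1 : ℕ) * exp (-T) ≤ exp 1 * exp (-2) := by gcongr; simp
      _ ≤ 1 / 2 := by
        rw [← exp_add, show (1 : ℝ) + -2 = -1 by norm_num]; exact exp_neg_one_lt_half.le
  have hγ : 0 ≤ log n + γ := by
    rw [← hQ]; exact mul_nonneg (mul_nonneg hp0.le (by linarith)) M.cast_nonneg
  have hMp : M * p ≤ 2 * (log n + γ) := by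
    rw [← hQ]; nlinarith [(M.cast_nonneg : (0 : ℝ) ≤ M)]
  -- `M p² x` is the error term in `(1 - p (1 - x))^(M - 1) ≈ exp (-(log n + γ))`.
  have hD : M * p ^ 2 * x ≤ 2 * exp 2 := mul_sq_mul_one_sub_pow_le hp0 hp1 hn hMn
  have hpow : (1 - p * (1 - x)) ^ (M - 1) ≤ exp (1 + 2 * exp 2) * exp (-(log n + γ)) := by
    refine (one_sub_pow_pred_le_exp (by nlinarith) M).trans ?_
    rw [← exp_add]
    refine exp_le_exp.2 ?_
    rw [← hQ, hsucc]
    nlinarith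
  have hpow0 : 0 ≤ (1 - p * (1 - x)) ^ (M - 1) := pow_nonneg (by nlinarith) _
  have hexp : exp (-(log n + γ)) * n = exp (-γ) := by
    rw [neg_add, exp_add, exp_neg (log n), exp_log hn0]
    field_simp
  calc n * degOneBound n M p = (M * p) * (T * x) * ((1 - p * (1 - x)) ^ (M - 1) * n) := by
        rw [degOneBound]; ring
    _ ≤ (2 * (log n + γ)) * (T * (exp 2 * exp (-T)))
          * (exp (1 + 2 * exp 2) * exp (-(log n + γ)) * n) := by
        gcongr
    _ = 2 * exp (3 + 2 * exp 2) * ((log n + γ) * exp (-γ) * (T * exp (-T))) := by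
        rw [mul_assoc (exp _), hexp, show (3 : ℝ) + 2 * exp 2 = 2 + (1 + 2 * exp 2) by ring,
          exp_add 2]
        ring

lemma tendsto_mul_exp_neg_mul_atTop {δ : ℝ} (hδ : 0 < δ) :
    Tendsto (fun y => y * exp (-(δ * y))) atTop (𝓝 0) := by
  refine (tendsto_rpow_mul_exp_neg_mul_atTop_nhds_zero 1 δ hδ).congr' ?_
  filter_upwards [eventually_ge_atTop 0] with y hy
  rw [rpow_one, neg_mul]

lemma add_mul_exp_neg_mul_mul_exp_neg_le {L γ T C₀ κ : ℝ} (hκ : 1 < κ) (hL : 1 ≤ L)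
    (hℓ : 1 ≤ log L) (hγ : C₀ ≤ γ) (hT : κ * log L ≤ T) :
    (L + γ) * exp (-γ) * (T * exp (-T))
      ≤ 2 * exp (-C₀) * κ * (log L * exp (-((κ - 1) * log L))) + 2 * (L * exp (-L)) := by
  have hfirst : 0 ≤ 2 * exp (-C₀) * κ * (log L * exp (-((κ - 1) * log L))) := by
    have : 0 ≤ κ := by linarith
    have : 0 ≤ log L := by linarith
    positivity
  have hsecond : 0 ≤ 2 * (L * exp (-L)) := by
    have : 0 ≤ L := by linarith
    positivity
  have hTexp0 : 0 ≤ T * exp (-T) := mul_nonneg (by nlinarith) (exp_pos _).le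
  rcases le_or_gt γ L with hγL | hγL
  · have hTexp : T * exp (-T) ≤ κ * log L * exp (-(κ * log L)) :=
      mul_exp_neg_le_mul_exp_neg (by nlinarith) hT
    have hLexp : L * exp (-(κ * log L)) = exp (-((κ - 1) * log L)) := by
      rw [← exp_log (by linarith : 0 < L), ← exp_add, log_exp]; ring_nf
    calc (L + γ) * exp (-γ) * (T * exp (-T))
        ≤ 2 * L * exp (-C₀) * (κ * log L * exp (-(κ * log L))) := by
          gcongr; linarith
      _ = 2 * exp (-C₀) * κ * (log L * (L * exp (-(κ * log L)))) := by ring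
      _ ≤ _ := by rw [hLexp]; linarith
  · have hγexp : (L + γ) * exp (-γ) ≤ 2 * (L * exp (-L)) :=
      calc (L + γ) * exp (-γ) ≤ 2 * (γ * exp (-γ)) := by nlinarith [exp_pos (-γ)]
        _ ≤ 2 * (L * exp (-L)) := by linarith [mul_exp_neg_le_mul_exp_neg hL hγL.le]
    have hTexp : T * exp (-T) ≤ 1 := (mul_exp_neg_le_exp_neg_one _).trans (by simp)
    calc (L + γ) * exp (-γ) * (T * exp (-T)) ≤ 2 * (L * exp (-L)) * 1 := by gcongr
      _ ≤ _ := by linarith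

lemma tendsto_add_mul_exp_neg_mul_mul_exp_neg {ι : Type*} {l : Filter ι} {L γ T : ι → ℝ}
    {C₀ κ : ℝ} (hκ : 1 < κ) (hL : Tendsto L l atTop) (hγ : ∀ᶠ i in l, C₀ ≤ γ i)
    (hT : ∀ᶠ i in l, κ * log (L i) ≤ T i) :
    Tendsto (fun i => (L i + γ i) * exp (-γ i) * (T i * exp (-T i))) l (𝓝 0) := by
  have hlogL : Tendsto (fun i => log (L i)) l atTop := tendsto_log_atTop.comp hL
  have hbound : Tendsto (fun i => 2 * exp (-C₀) * κ * (log (L i) * exp (-((κ - 1) * log (L i))))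
      + 2 * (L i * exp (-(1 * L i)))) l (𝓝 0) := by
    simpa using (((tendsto_mul_exp_neg_mul_atTop (by linarith)).comp hlogL).const_mul
      (2 * exp (-C₀) * κ)).add (((tendsto_mul_exp_neg_mul_atTop one_pos).comp hL).const_mul 2)
  refine squeeze_zero' ?_ ?_ hbound
  · filter_upwards [hγ, hT, hL.eventually_ge_atTop (-C₀), hlogL.eventually_ge_atTop 0]
      with i hγi hTi hLi hlogi
    have : 0 ≤ T i := by nlinarith
    have : 0 ≤ L i + γ i := by linarith
    positivity
  filter_upwards [hγ, hT, hL.eventually_ge_atTop 1, hlogL.eventually_ge_atTop 1]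
    with i hγi hTi hL1 hlog1
  simpa using add_mul_exp_neg_mul_mul_exp_neg_le hκ hL1 hlog1 hγi hTi

lemma mul_log_log_le_mul {n M : ℕ} {p γ ε C₀ : ℝ} (hp0 : 0 < p) (hp1 : p < 1) (hε : 0 < ε)
    (hε1 : ε < 1) (hQ : p * (1 - (1 - p) ^ (n - 1)) * M = log n + γ)
    (hM : M * log (log n) < (1 - ε) * n * log n) (hγ : C₀ ≤ γ) (hLC : -2 * C₀ / ε ≤ log n)
    (hL : 0 < log n) (hℓ : 0 ≤ log (log n)) :
    (1 - ε / 2) / (1 - ε) * log (log n) ≤ n * p := by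
  have hpow0 := pow_nonneg (sub_pos.2 hp1).le (n - 1)
  have hpow1 : (1 - p) ^ (n - 1) ≤ 1 := pow_le_one₀ (sub_pos.2 hp1).le (by linarith)
  have hQ0 : 0 ≤ p * (1 - (1 - p) ^ (n - 1)) := mul_nonneg hp0.le (by linarith)
  have hQp : p * (1 - (1 - p) ^ (n - 1)) ≤ p := mul_le_of_le_one_right hp0.le (by linarith)
  have hγL : (1 - ε / 2) * log n ≤ log n + γ := by
    rw [div_le_iff₀ hε] at hLC; linarith
  have hX : 0 ≤ (1 - ε) * n * log n := by
    have : 0 < 1 - ε := by linarith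
    positivity
  have key : (1 - ε / 2) * log (log n) * log n ≤ (1 - ε) * (n * p) * log n :=
    calc (1 - ε / 2) * log (log n) * log n = (1 - ε / 2) * log n * log (log n) := by ring
      _ ≤ (log n + γ) * log (log n) := mul_le_mul_of_nonneg_right hγL hℓ
      _ = p * (1 - (1 - p) ^ (n - 1)) * (M * log (log n)) := by rw [← hQ]; ring
      _ ≤ p * (1 - (1 - p) ^ (n - 1)) * ((1 - ε) * n * log n) := by gcongr
      _ ≤ p * ((1 - ε) * n * log n) := by gcongr
      _ = (1 - ε) * (n * p) * log n := by ring
  rw [div_mul_eq_mul_div, div_le_iff₀ (by linarith)]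
  nlinarith [le_of_mul_le_mul_right key hL]

lemma cast_le_sq_of_mul_log_log_lt {n M : ℕ} {ε : ℝ} (hε : 0 ≤ ε) (hℓ : 1 ≤ log (log n))
    (hM : M * log (log n) < (1 - ε) * n * log n) : (M : ℝ) ≤ n ^ 2 := by
  have hnL : 0 ≤ (n : ℝ) * log n := mul_nonneg n.cast_nonneg (log_natCast_nonneg n)
  calc (M : ℝ) ≤ M * log (log n) := le_mul_of_one_le_right M.cast_nonneg hℓ
    _ ≤ n * log n := by nlinarith
    _ ≤ n ^ 2 := by
      rw [sq]; exact mul_le_mul_of_nonneg_left (log_le_self n.cast_nonneg) n.cast_nonneg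

lemma tendsto_mul_degOneBound (m : ℕ → ℕ) (p c : ℕ → ℝ) (hp : ∀ n, p n ∈ Set.Ioo (0 : ℝ) 1)
    {ε : ℝ} (hε : 0 < ε)
    (hrange : ∀ᶠ n : ℕ in atTop, (m n : ℝ) < (1 - ε) * n * log n / log (log n))
    (heq : ∀ᶠ n : ℕ in atTop, p n * (1 - (1 - p n) ^ (n - 1)) = (log n + c n) / m n)
    {C₀ : ℝ} (hc : ∀ᶠ n in atTop, C₀ ≤ c n) :
    Tendsto (fun n : ℕ => n * degOneBound n (m n) (p n)) atTop (𝓝 0) := by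
  have hL : Tendsto (fun n : ℕ => log n) atTop atTop :=
    tendsto_log_atTop.comp tendsto_natCast_atTop_atTop
  have hlogL : Tendsto (fun n : ℕ => log (log n)) atTop atTop := tendsto_log_atTop.comp hL
  have hQ : ∀ᶠ n : ℕ in atTop, p n * (1 - (1 - p n) ^ (n - 1)) * m n = log n + c n := by
    filter_upwards [heq, eventually_ge_atTop 2] with n he hn
    have hQpos : 0 < p n * (1 - (1 - p n) ^ (n - 1)) := mul_pos (hp n).1
      (sub_pos.2 (pow_lt_one₀ (by linarith [(hp n).2]) (by linarith [(hp n).1]) (by omega)))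
    have hm : (m n : ℝ) ≠ 0 := fun h => by rw [h, div_zero] at he; exact hQpos.ne' he
    rw [he, div_mul_cancel₀ _ hm]
  have hMℓ : ∀ᶠ n : ℕ in atTop, m n * log (log n) < (1 - ε) * n * log n := by
    filter_upwards [hrange, hlogL.eventually_gt_atTop 0] with n hr hℓ
    rwa [lt_div_iff₀ hℓ] at hr
  have hε1 : ε < 1 := by
    obtain ⟨n, hn, hL0⟩ := (hMℓ.and ((hlogL.eventually_gt_atTop 0).and
      (hL.eventually_gt_atTop 0))).exists
    by_contra! h
    have : (1 - ε) * n * log n ≤ 0 :=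
      mul_nonpos_of_nonpos_of_nonneg (mul_nonpos_of_nonpos_of_nonneg (by linarith) n.cast_nonneg)
        hL0.2.le
    nlinarith [(m n).cast_nonneg (α := ℝ)]
  have hM : ∀ᶠ n : ℕ in atTop, (m n : ℝ) ≤ n ^ 2 := by
    filter_upwards [hMℓ, hlogL.eventually_ge_atTop 1] with n h hℓ
    exact cast_le_sq_of_mul_log_log_lt hε.le hℓ h
  have hκ : 1 < (1 - ε / 2) / (1 - ε) := by rw [one_lt_div (by linarith)]; linarith
  have hT : ∀ᶠ n : ℕ in atTop, (1 - ε / 2) / (1 - ε) * log (log n) ≤ n * p n := by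
    filter_upwards [hQ, hMℓ, hc, hL.eventually_ge_atTop (-2 * C₀ / ε), hL.eventually_gt_atTop 0,
      hlogL.eventually_ge_atTop 0] with n hQn hMn hcn hLC hL0 hℓ
    exact mul_log_log_le_mul (hp n).1 (hp n).2 hε hε1 hQn hMn hcn hLC hL0 hℓ
  have hlim := (tendsto_add_mul_exp_neg_mul_mul_exp_neg hκ hL hc hT).const_mul
    (2 * exp (3 + 2 * exp 2))
  rw [mul_zero] at hlim
  refine squeeze_zero' (Eventually.of_forall fun n =>
    mul_nonneg n.cast_nonneg (degOneBound_nonneg (hp n).1.le (hp n).2.le)) ?_ hlim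
  filter_upwards [hQ, hM, hT, eventually_ge_atTop 2, hlogL.eventually_ge_atTop 2]
    with n hQn hMn hTn hn hℓ
  exact mul_degOneBound_le (hp n).1 (hp n).2 hn hMn (by nlinarith) hQn

theorem no_degree_one_sparse_general (m : ℕ → ℕ) (p c : ℕ → ℝ)
    (hp : ∀ n, p n ∈ Set.Ioo (0 : ℝ) 1)
    (ε : ℝ) (hε : 0 < ε)
    (hrange : ∀ᶠ (n : ℕ) in atTop, (m n : ℝ) < (1 - ε) * n * Real.log n / Real.log (Real.log n))
    (heq : ∀ᶠ (n : ℕ) in atTop,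
      p n * (1 - (1 - p n) ^ (n - 1)) = (Real.log n + c n) / (m n))
    (hc : (∃ c₀ : ℝ, Tendsto c atTop (nhds c₀)) ∨ Tendsto c atTop atTop) :
    (∃ C : ℕ → ℝ, (C =o[atTop] fun (n : ℕ) => 1 / (n : ℝ)) ∧
      ∀ n, ∀ v : Fin n, (rig n (m n) (p n) {ω | deg ω v = 1}).toReal ≤ C n) ∧
    Tendsto (fun (n : ℕ) => (rig n (m n) (p n) {ω | ∀ v, deg ω v ≠ 1}).toReal)
      atTop (nhds 1) := by
  obtain ⟨C₀, hC₀⟩ : ∃ C₀, ∀ᶠ n in atTop, C₀ ≤ c n := by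
    rcases hc with ⟨c₀, hc₀⟩ | hc₀
    · exact ⟨c₀ - 1, hc₀.eventually (eventually_ge_nhds (by linarith))⟩
    · exact ⟨0, hc₀.eventually_ge_atTop 0⟩
  have hlim := tendsto_mul_degOneBound m p c hp hε hrange heq hC₀
  refine ⟨⟨fun n => degOneBound n (m n) (p n), ?_,
    fun n v => rig_real_deg_eq_one_le (hp n).1.le (hp n).2.le v⟩, ?_⟩
  · refine (Asymptotics.isLittleO_iff_tendsto' ?_).2 (hlim.congr fun n => ?_)
    · filter_upwards [eventually_ge_atTop 1] with n hn h
      simp at h; omega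
    · rw [div_div_eq_mul_div, div_one, mul_comm]
  · have hlow := (tendsto_const_nhds (x := (1 : ℝ))).sub hlim
    rw [sub_zero] at hlow
    exact tendsto_of_tendsto_of_tendsto_of_le_of_le hlow tendsto_const_nhds
      (fun n => rig_real_forall_deg_ne_one_ge (hp n).1.le (hp n).2.le) fun n => measureReal_le_one

theorem no_degree_one_sparse (m : ℕ → ℕ) (p c : ℕ → ℝ)
    (hp : ∀ n, p n ∈ Set.Ioo (0 : ℝ) 1)
    (hm : (fun (n : ℕ) => (Real.log n) ^ 2) =o[atTop] fun (n : ℕ) => (m n : ℝ))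
    (ε : ℝ) (hε : 0 < ε)
    (hrange : ∀ᶠ (n : ℕ) in atTop, (m n : ℝ) < (1 - ε) * n * Real.log n / Real.log (Real.log n))
    (heq : ∀ᶠ (n : ℕ) in atTop,
      p n * (1 - (1 - p n) ^ (n - 1)) = (Real.log n + c n) / (m n))
    (hc : (∃ c₀ : ℝ, Tendsto c atTop (nhds c₀)) ∨ Tendsto c atTop atTop) :
    (∃ C : ℕ → ℝ, (C =o[atTop] fun (n : ℕ) => 1 / (n : ℝ)) ∧
      ∀ n, ∀ v : Fin n, (rig n (m n) (p n) {ω | deg ω v = 1}).toReal ≤ C n) ∧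
    Tendsto (fun (n : ℕ) => (rig n (m n) (p n) {ω | ∀ v, deg ω v ≠ 1}).toReal)
      atTop (nhds 1) :=
  no_degree_one_sparse_general m p c hp ε hε hrange heq hc
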